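/- arXiv:1602.00649 — 7 statements merged into one kernel-verified Lean document; each statement's English description precedes it below -/
import Mathlib

section
/- Suppose the rational Arnoldi relation $A^* V_k = V_k T_k^* + \hat v_{k+1} g_k^*$ holds with $V_k^* V_k = I$, $V_k^* \hat v_{k+1} = 0$, $\hat v_{k+1}^* \hat v_{k+1} = 1$, and $Y_k$ solves the reduced Riccati equation. Then the residual of $X_k = V_k Y_k V_k^*$ satisfies $R_k = \hat v_{k+1} g_k^* Y_k V_k^* + V_k Y_k g_k \hat v_{k+1}^*$. -/
open Matrix

theorem residual_two_term (n p q d : ℕ)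
    (A : Matrix (Fin n) (Fin n) ℂ) (B : Matrix (Fin n) (Fin q) ℂ)
    (C : Matrix (Fin p) (Fin n) ℂ) (V : Matrix (Fin n) (Fin d) ℂ)
    (v : Matrix (Fin n) (Fin 1) ℂ) (g : Matrix (Fin d) (Fin 1) ℂ)
    (Y : Matrix (Fin d) (Fin d) ℂ)
    (hV : Vᴴ * V = 1) (hvV : Vᴴ * v = 0) (hv : vᴴ * v = 1)
    (hArn : Aᴴ * V = V * (Vᴴ * A * V)ᴴ + v * gᴴ)
    (hC : Cᴴ = V * (Vᴴ * Cᴴ))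
    (hYherm : Y.IsHermitian)
    (hY : (Vᴴ * A * V)ᴴ * Y + Y * (Vᴴ * A * V)
        - Y * (Vᴴ * B) * (Vᴴ * B)ᴴ * Y + (C * V)ᴴ * (C * V) = 0) :
    Aᴴ * (V * Y * Vᴴ) + (V * Y * Vᴴ) * A
      - (V * Y * Vᴴ) * B * Bᴴ * (V * Y * Vᴴ) + Cᴴ * C
    = v * gᴴ * Y * Vᴴ + V * Y * g * vᴴ := by
  have hA2 : Vᴴ * A = (Vᴴ * A * V) * Vᴴ + g * vᴴ := by
    have := congrArg conjTranspose hArn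
    simpa [conjTranspose_add, conjTranspose_mul, mul_assoc] using this
  have hCC : C = (C * V) * Vᴴ := by
    have := congrArg conjTranspose hC
    simpa [conjTranspose_mul, mul_assoc] using this
  have hY' : (Vᴴ * A * V)ᴴ * Y + Y * (Vᴴ * A * V)
      - Y * (Vᴴ * B) * (Bᴴ * V) * Y + (Vᴴ * Cᴴ) * (C * V) = 0 := by
    have h1 : (Vᴴ * B)ᴴ = Bᴴ * V := by simp [conjTranspose_mul]
    have h2 : (C * V)ᴴ = Vᴴ * Cᴴ := by simp [conjTranspose_mul]
    rw [h1, h2] at hY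
    linear_combination (norm := noncomm_ring) hY
  calc Aᴴ * (V * Y * Vᴴ) + (V * Y * Vᴴ) * A
      - (V * Y * Vᴴ) * B * Bᴴ * (V * Y * Vᴴ) + Cᴴ * C
      = (Aᴴ * V) * (Y * Vᴴ) + (V * Y) * (Vᴴ * A)
        - V * (Y * (Vᴴ * B) * (Bᴴ * V) * Y) * Vᴴ + Cᴴ * C := by
          simp only [Matrix.mul_assoc]
    _ = (V * (Vᴴ * A * V)ᴴ + v * gᴴ) * (Y * Vᴴ)
        + (V * Y) * ((Vᴴ * A * V) * Vᴴ + g * vᴴ)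
        - V * (Y * (Vᴴ * B) * (Bᴴ * V) * Y) * Vᴴ
        + (V * (Vᴴ * Cᴴ)) * ((C * V) * Vᴴ) := by
          rw [← hArn, ← hA2, ← hC, ← hCC]
    _ = V * ((Vᴴ * A * V)ᴴ * Y + Y * (Vᴴ * A * V)
        - Y * (Vᴴ * B) * (Bᴴ * V) * Y + (Vᴴ * Cᴴ) * (C * V)) * Vᴴ
        + v * gᴴ * Y * Vᴴ + V * Y * g * vᴴ := by
          simp only [Matrix.mul_add, Matrix.add_mul, Matrix.mul_sub, Matrix.sub_mul,
            Matrix.mul_assoc]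
          abel
    _ = v * gᴴ * Y * Vᴴ + V * Y * g * vᴴ := by
          rw [hY', Matrix.mul_zero, Matrix.zero_mul, zero_add]
end

section
/- Under the rational Arnoldi relation $A^* V_k = V_k T_k^* + \hat v_{k+1} g_k^*$ and with $Y_k$ solving the reduced Riccati equation, the matrix $X_k = V_k Y_k V_k^*$ is an exact solution of the modified Riccati equation $(A^* - \hat v_{k+1} f_k^*) X + X (A - f_k \hat v_{k+1}^*) - X B B^* X + C^* C = 0$, where $f_k = V_k g_k$. -/
open Matrix

theorem modified_riccati_exact (n p q d : ℕ)
    (A : Matrix (Fin n) (Fin n) ℂ) (B : Matrix (Fin n) (Fin q) ℂ)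
    (C : Matrix (Fin p) (Fin n) ℂ) (V : Matrix (Fin n) (Fin d) ℂ)
    (v : Matrix (Fin n) (Fin 1) ℂ) (g : Matrix (Fin d) (Fin 1) ℂ)
    (Y : Matrix (Fin d) (Fin d) ℂ)
    (hV : Vᴴ * V = 1) (hvV : Vᴴ * v = 0) (hv : vᴴ * v = 1)
    (hArn : Aᴴ * V = V * (Vᴴ * A * V)ᴴ + v * gᴴ)
    (hC : Cᴴ = V * (Vᴴ * Cᴴ))
    (hYherm : Y.IsHermitian)
    (hY : (Vᴴ * A * V)ᴴ * Y + Y * (Vᴴ * A * V)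
        - Y * (Vᴴ * B) * (Vᴴ * B)ᴴ * Y + (C * V)ᴴ * (C * V) = 0) :
    (Aᴴ - v * (V * g)ᴴ) * (V * Y * Vᴴ) + (V * Y * Vᴴ) * (A - (V * g) * vᴴ)
      - (V * Y * Vᴴ) * B * Bᴴ * (V * Y * Vᴴ) + Cᴴ * C = 0 := by
  have hArnH : Vᴴ * A = (Vᴴ * A * V) * Vᴴ + g * vᴴ := by
    have := congrArg conjTranspose hArn
    simpa [conjTranspose_mul, Matrix.mul_assoc] using this
  have hgV : (V * g)ᴴ * V = gᴴ := by
    rw [conjTranspose_mul, Matrix.mul_assoc, hV, Matrix.mul_one]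
  have h1 : (Aᴴ - v * (V * g)ᴴ) * V = V * (Vᴴ * A * V)ᴴ := by
    rw [Matrix.sub_mul, hArn, Matrix.mul_assoc v, hgV, add_sub_cancel_right]
  have h2 : Vᴴ * (A - (V * g) * vᴴ) = (Vᴴ * A * V) * Vᴴ := by
    have e1 : Vᴴ * (V * g * vᴴ) = g * vᴴ := by
      rw [← Matrix.mul_assoc, ← Matrix.mul_assoc, hV, Matrix.one_mul]
    rw [Matrix.mul_sub, e1]
    conv_lhs => rw [hArnH]
    rw [add_sub_cancel_right]
  have hCform : C = (Vᴴ * Cᴴ)ᴴ * Vᴴ := by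
    have := congrArg conjTranspose hC
    simpa [conjTranspose_mul] using this
  have hCVeq : C * V = (Vᴴ * Cᴴ)ᴴ := by
    conv_lhs => rw [hCform]
    rw [Matrix.mul_assoc, hV, Matrix.mul_one]
  have h4 : Cᴴ * C = V * ((C * V)ᴴ * (C * V)) * Vᴴ := by
    have e : Cᴴ * C = (V * (Vᴴ * Cᴴ)) * ((Vᴴ * Cᴴ)ᴴ * Vᴴ) := by
      rw [← hC, ← hCform]
    rw [e, hCVeq, conjTranspose_conjTranspose]
    simp only [Matrix.mul_assoc]
  have key1 : (Aᴴ - v * (V * g)ᴴ) * (V * Y * Vᴴ) = V * ((Vᴴ * A * V)ᴴ * Y) * Vᴴ := by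
    rw [show (Aᴴ - v * (V * g)ᴴ) * (V * Y * Vᴴ)
        = ((Aᴴ - v * (V * g)ᴴ) * V) * Y * Vᴴ by
      simp only [Matrix.mul_assoc], h1]
    simp only [Matrix.mul_assoc]
  have key2 : (V * Y * Vᴴ) * (A - (V * g) * vᴴ) = V * (Y * (Vᴴ * A * V)) * Vᴴ := by
    rw [show (V * Y * Vᴴ) * (A - (V * g) * vᴴ)
        = V * Y * (Vᴴ * (A - (V * g) * vᴴ)) by
      simp only [Matrix.mul_assoc], h2]
    simp only [Matrix.mul_assoc]
  have key3 : (V * Y * Vᴴ) * B * Bᴴ * (V * Y * Vᴴ)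
      = V * (Y * (Vᴴ * B) * (Vᴴ * B)ᴴ * Y) * Vᴴ := by
    simp only [conjTranspose_mul, conjTranspose_conjTranspose, Matrix.mul_assoc]
  rw [key1, key2, key3, h4]
  have : V * ((Vᴴ * A * V)ᴴ * Y) * Vᴴ + V * (Y * (Vᴴ * A * V)) * Vᴴ
      - V * (Y * (Vᴴ * B) * (Vᴴ * B)ᴴ * Y) * Vᴴ + V * ((C * V)ᴴ * (C * V)) * Vᴴ
      = V * ((Vᴴ * A * V)ᴴ * Y + Y * (Vᴴ * A * V)
        - Y * (Vᴴ * B) * (Vᴴ * B)ᴴ * Y + (C * V)ᴴ * (C * V)) * Vᴴ := by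
    simp only [Matrix.mul_add, Matrix.add_mul, Matrix.mul_sub, Matrix.sub_mul,
      Matrix.mul_assoc]
  rw [this, hY]
  simp
end

section
/- Under the rational Arnoldi relation $A^* V_k = V_k T_k^* + \hat v_{k+1} g_k^*$, the subspace range($V_k$) satisfies an Arnoldi-type relation for $\mathcal{A}_k = A - B B^* X_k$ with $X_k = V_k Y_k V_k^*$: namely $\mathcal{A}_k^* V_k = V_k \mathcal{T}_k^* + \hat v_{k+1} g_k^*$, where $\mathcal{T}_k = T_k - B_k B_k^* Y_k$. -/
open Matrix

theorem arnoldi_closed_loop (n q d : ℕ)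
    (A : Matrix (Fin n) (Fin n) ℂ) (B : Matrix (Fin n) (Fin q) ℂ)
    (V : Matrix (Fin n) (Fin d) ℂ)
    (v : Matrix (Fin n) (Fin 1) ℂ) (g : Matrix (Fin d) (Fin 1) ℂ)
    (Y : Matrix (Fin d) (Fin d) ℂ)
    (hV : Vᴴ * V = 1)
    (hArn : Aᴴ * V = V * (Vᴴ * A * V)ᴴ + v * gᴴ)
    (hYherm : Y.IsHermitian) :
    (A - B * Bᴴ * (V * Y * Vᴴ))ᴴ * V
      = V * ((Vᴴ * A * V) - (Vᴴ * B) * (Vᴴ * B)ᴴ * Y)ᴴ + v * gᴴ := by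
  rw [conjTranspose_sub, Matrix.sub_mul, hArn, conjTranspose_sub, Matrix.mul_sub]
  have h : (B * Bᴴ * (V * Y * Vᴴ))ᴴ * V = V * ((Vᴴ * B) * (Vᴴ * B)ᴴ * Y)ᴴ := by
    simp only [conjTranspose_mul, conjTranspose_conjTranspose]
    simp only [Matrix.mul_assoc]
  rw [h]
  abel
end

section
/- Let $V_k$ have orthonormal columns with range($C^*$) \subseteq range($V_k$), $Y_k$ solve the reduced Riccati equation, $X_k = V_k Y_k V_k^*$, and $\mathcal{T}_k = T_k - B_k B_k^* Y_k$. Define the semi-residual $\widehat R_k = A^* V_k Y_k + V_k Y_k \mathcal{T}_k + C^* (C V_k)$. Then $R_k = \widehat R_k V_k^* + V_k \widehat R_k^*$. -/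
open Matrix

theorem semi_residual_decomposition (n p q d : ℕ)
    (A : Matrix (Fin n) (Fin n) ℂ) (B : Matrix (Fin n) (Fin q) ℂ)
    (C : Matrix (Fin p) (Fin n) ℂ) (V : Matrix (Fin n) (Fin d) ℂ)
    (Y : Matrix (Fin d) (Fin d) ℂ)
    (hV : Vᴴ * V = 1)
    (hC : Cᴴ * C * (V * Vᴴ) = Cᴴ * C)
    (hYherm : Y.IsHermitian)
    (hY : (Vᴴ * A * V)ᴴ * Y + Y * (Vᴴ * A * V)
        - Y * (Vᴴ * B) * (Vᴴ * B)ᴴ * Y + (C * V)ᴴ * (C * V) = 0) :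
    Aᴴ * (V * Y * Vᴴ) + (V * Y * Vᴴ) * A
      - (V * Y * Vᴴ) * B * Bᴴ * (V * Y * Vᴴ) + Cᴴ * C
    = (Aᴴ * V * Y + V * Y * ((Vᴴ * A * V) - (Vᴴ * B) * (Vᴴ * B)ᴴ * Y) + Cᴴ * (C * V)) * Vᴴ
      + V * (Aᴴ * V * Y + V * Y * ((Vᴴ * A * V) - (Vᴴ * B) * (Vᴴ * B)ᴴ * Y) + Cᴴ * (C * V))ᴴ := by
  have hYh : Yᴴ = Y := hYherm
  have h2 : V * Vᴴ * (Cᴴ * C) = Cᴴ * C := by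
    have := congrArg conjTranspose hC
    simpa [conjTranspose_mul, mul_assoc] using this
  have key : V * ((Vᴴ * A * V)ᴴ * Y + Y * (Vᴴ * A * V)
        - Y * (Vᴴ * B) * (Vᴴ * B)ᴴ * Y + (C * V)ᴴ * (C * V)) * Vᴴ = 0 := by
    rw [hY]; simp
  have expand :
      (Aᴴ * V * Y + V * Y * ((Vᴴ * A * V) - (Vᴴ * B) * (Vᴴ * B)ᴴ * Y) + Cᴴ * (C * V)) * Vᴴ
      + V * (Aᴴ * V * Y + V * Y * ((Vᴴ * A * V) - (Vᴴ * B) * (Vᴴ * B)ᴴ * Y) + Cᴴ * (C * V))ᴴ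
    = (Aᴴ * (V * Y * Vᴴ) + (V * Y * Vᴴ) * A
        - (V * Y * Vᴴ) * B * Bᴴ * (V * Y * Vᴴ) + Cᴴ * C)
      + V * ((Vᴴ * A * V)ᴴ * Y + Y * (Vᴴ * A * V)
        - Y * (Vᴴ * B) * (Vᴴ * B)ᴴ * Y + (C * V)ᴴ * (C * V)) * Vᴴ
      - V * Vᴴ * (Cᴴ * C * (V * Vᴴ)) + Cᴴ * C * (V * Vᴴ) + V * Vᴴ * (Cᴴ * C) - Cᴴ * C := by
    simp only [conjTranspose_add, conjTranspose_sub, conjTranspose_mul, conjTranspose_conjTranspose, hYh,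
      Matrix.mul_add, Matrix.add_mul, Matrix.mul_sub, Matrix.sub_mul, Matrix.mul_assoc, Matrix.mul_smul, Matrix.smul_mul]
    abel
  rw [expand, key, hC, h2]
  abel
end

section
/- Under the semi-residual relation, $X_k = V_k Y_k V_k^*$ solves the Riccati equation $A^* X + X A - X B B^* X + C^* C = 0$ (i.e., $R_k = 0$) if and only if $Z_k = V_k Y_k$ solves the Sylvester equation $A^* Z + Z \mathcal{T}_k + C^* C V_k = 0$, where $\mathcal{T}_k = T_k - B_k B_k^* Y_k$. -/
open Matrix

theorem riccati_iff_sylvester (n p q d : ℕ)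
    (A : Matrix (Fin n) (Fin n) ℂ) (B : Matrix (Fin n) (Fin q) ℂ)
    (C : Matrix (Fin p) (Fin n) ℂ) (V : Matrix (Fin n) (Fin d) ℂ)
    (Y : Matrix (Fin d) (Fin d) ℂ)
    (hV : Vᴴ * V = 1)
    (hC : Cᴴ * C * (V * Vᴴ) = Cᴴ * C)
    (hYherm : Y.IsHermitian)
    (hY : (Vᴴ * A * V)ᴴ * Y + Y * (Vᴴ * A * V)
        - Y * (Vᴴ * B) * (Vᴴ * B)ᴴ * Y + (C * V)ᴴ * (C * V) = 0) :
    (Aᴴ * (V * Y * Vᴴ) + (V * Y * Vᴴ) * A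
      - (V * Y * Vᴴ) * B * Bᴴ * (V * Y * Vᴴ) + Cᴴ * C = 0)
    ↔ (Aᴴ * (V * Y) + (V * Y) * ((Vᴴ * A * V) - (Vᴴ * B) * (Vᴴ * B)ᴴ * Y)
        + Cᴴ * C * V = 0) := by
  have hV1 : ∀ M : Matrix (Fin d) (Fin n) ℂ, Vᴴ * (V * M) = M := fun M => by
    rw [← Matrix.mul_assoc, hV, Matrix.one_mul]
  have hV1' : Vᴴ * V = (1 : Matrix (Fin d) (Fin d) ℂ) := hV
  have hC1 : ∀ M : Matrix (Fin n) (Fin n) ℂ,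
      Cᴴ * (C * (V * (Vᴴ * M))) = Cᴴ * (C * M) := fun M => by
    calc Cᴴ * (C * (V * (Vᴴ * M))) = (Cᴴ * C * (V * Vᴴ)) * M := by
          simp [Matrix.mul_assoc]
      _ = Cᴴ * (C * M) := by rw [hC, Matrix.mul_assoc]
  have hC1'' : Cᴴ * (C * (V * Vᴴ)) = Cᴴ * C := by rw [← Matrix.mul_assoc, hC]
  have hCH : V * Vᴴ * (Cᴴ * C) = Cᴴ * C := by
    have := congrArg conjTranspose hC
    simpa [Matrix.conjTranspose_mul, Matrix.mul_assoc] using this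
  have hC2 : ∀ M : Matrix (Fin n) (Fin n) ℂ,
      V * (Vᴴ * (Cᴴ * (C * M))) = Cᴴ * (C * M) := fun M => by
    calc V * (Vᴴ * (Cᴴ * (C * M))) = (V * Vᴴ * (Cᴴ * C)) * M := by
          simp [Matrix.mul_assoc]
      _ = Cᴴ * (C * M) := by rw [hCH, Matrix.mul_assoc]
  set S : Matrix (Fin n) (Fin d) ℂ :=
    Aᴴ * (V * Y) + (V * Y) * ((Vᴴ * A * V) - (Vᴴ * B) * (Vᴴ * B)ᴴ * Y) + Cᴴ * C * V with hSdef
  set R : Matrix (Fin n) (Fin n) ℂ :=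
    Aᴴ * (V * Y * Vᴴ) + (V * Y * Vᴴ) * A - (V * Y * Vᴴ) * B * Bᴴ * (V * Y * Vᴴ) + Cᴴ * C
    with hRdef
  have key1 : S = R * V := by
    rw [hSdef, hRdef]
    simp only [Matrix.add_mul, Matrix.sub_mul, Matrix.mul_add, Matrix.mul_sub,
      Matrix.conjTranspose_mul, Matrix.conjTranspose_conjTranspose, Matrix.mul_assoc,
      hV1, hV1', Matrix.mul_one, Matrix.one_mul]
    abel
  have key2 : R = S * Vᴴ + V * Sᴴ - (V * Sᴴ) * (V * Vᴴ) := by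
    rw [hSdef, hRdef]
    simp only [Matrix.conjTranspose_add, Matrix.conjTranspose_sub, Matrix.conjTranspose_mul,
      Matrix.conjTranspose_conjTranspose, hYherm.eq,
      Matrix.add_mul, Matrix.sub_mul, Matrix.mul_add, Matrix.mul_sub, Matrix.mul_assoc,
      hV1, hC1, hC1'', hC2, Matrix.mul_one, Matrix.one_mul]
    abel
  constructor
  · intro h
    rw [key1, h, Matrix.zero_mul]
  · intro h
    rw [key2, h]
    simp
end

section
/- Under the Arnoldi relation $A^* V_k = V_k T_k^* + \hat v_{k+1} g_k^*$ with $V_k^* \hat v_{k+1} = 0$ and $f_k = V_k g_k$: if $(\theta, z)$ is an eigenpair of $T_k^* - Y_k B_k B_k^*$, then $(\theta, V_k z)$ is an eigenpair of $A^* - \hat v_{k+1} f_k^* - X_k B B^*$, where $X_k = V_k Y_k V_k^*$ and $B_k = V_k^* B$. In particular, the spectrum of $T_k^* - Y_k B_k B_k^*$ is contained in that of $A^* - \hat v_{k+1} f_k^* - X_k B B^*$. -/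
open Matrix

lemma mem_spectrum_iff_aux {m : ℕ} (M : Matrix (Fin m) (Fin m) ℂ) (θ : ℂ) :
    θ ∈ spectrum ℂ M ↔ ∃ z, z ≠ 0 ∧ M.mulVec z = θ • z := by
  rw [spectrum.mem_iff, Matrix.isUnit_iff_isUnit_det, isUnit_iff_ne_zero, not_ne_iff,
    ← Matrix.exists_mulVec_eq_zero_iff]
  have halg : ∀ z : Fin m → ℂ, (algebraMap ℂ (Matrix (Fin m) (Fin m) ℂ) θ).mulVec z = θ • z := by
    intro z
    rw [Algebra.algebraMap_eq_smul_one, Matrix.smul_mulVec, Matrix.one_mulVec]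
  constructor
  · rintro ⟨z, hz, h⟩
    refine ⟨z, hz, ?_⟩
    rw [Matrix.sub_mulVec, halg] at h
    exact (sub_eq_zero.mp h).symm
  · rintro ⟨z, hz, h⟩
    refine ⟨z, hz, ?_⟩
    rw [Matrix.sub_mulVec, halg, h, sub_self]

theorem spectrum_inclusion (n q d : ℕ)
    (A : Matrix (Fin n) (Fin n) ℂ) (B : Matrix (Fin n) (Fin q) ℂ)
    (V : Matrix (Fin n) (Fin d) ℂ)
    (v : Matrix (Fin n) (Fin 1) ℂ) (g : Matrix (Fin d) (Fin 1) ℂ)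
    (Y : Matrix (Fin d) (Fin d) ℂ)
    (hV : Vᴴ * V = 1) (hvV : Vᴴ * v = 0) (hv : vᴴ * v = 1)
    (hArn : Aᴴ * V = V * (Vᴴ * A * V)ᴴ + v * gᴴ)
    (hYherm : Y.IsHermitian)
    (hVinj : Function.Injective V.mulVec) :
    (∀ (θ : ℂ) (z : Fin d → ℂ), z ≠ 0 →
      ((Vᴴ * A * V)ᴴ - Y * (Vᴴ * B) * (Vᴴ * B)ᴴ).mulVec z = θ • z →
      (Aᴴ - v * (V * g)ᴴ - (V * Y * Vᴴ) * B * Bᴴ).mulVec (V.mulVec z)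
          = θ • (V.mulVec z) ∧ V.mulVec z ≠ 0)
    ∧ spectrum ℂ ((Vᴴ * A * V)ᴴ - Y * (Vᴴ * B) * (Vᴴ * B)ᴴ)
        ⊆ spectrum ℂ (Aᴴ - v * (V * g)ᴴ - (V * Y * Vᴴ) * B * Bᴴ) := by
  have key : (Aᴴ - v * (V * g)ᴴ - (V * Y * Vᴴ) * B * Bᴴ) * V
      = V * ((Vᴴ * A * V)ᴴ - Y * (Vᴴ * B) * (Vᴴ * B)ᴴ) := by
    have hBV : Bᴴ * V = (Vᴴ * B)ᴴ := by simp [conjTranspose_mul]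
    have h1 : v * (V * g)ᴴ * V = v * gᴴ := by
      rw [conjTranspose_mul, Matrix.mul_assoc, Matrix.mul_assoc, hV, Matrix.mul_one]
    have h2 : V * Y * Vᴴ * B * Bᴴ * V = V * (Y * (Vᴴ * B) * (Vᴴ * B)ᴴ) := by
      calc V * Y * Vᴴ * B * Bᴴ * V = V * (Y * (Vᴴ * (B * (Bᴴ * V)))) := by
            simp only [Matrix.mul_assoc]
        _ = V * (Y * (Vᴴ * B) * (Vᴴ * B)ᴴ) := by
            rw [hBV]; simp only [Matrix.mul_assoc]
    rw [Matrix.sub_mul, Matrix.sub_mul, hArn, h1, h2, Matrix.mul_sub]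
    abel
  have main : ∀ (θ : ℂ) (z : Fin d → ℂ), z ≠ 0 →
      ((Vᴴ * A * V)ᴴ - Y * (Vᴴ * B) * (Vᴴ * B)ᴴ).mulVec z = θ • z →
      (Aᴴ - v * (V * g)ᴴ - (V * Y * Vᴴ) * B * Bᴴ).mulVec (V.mulVec z)
          = θ • (V.mulVec z) ∧ V.mulVec z ≠ 0 := by
    intro θ z hz heig
    constructor
    · rw [Matrix.mulVec_mulVec, key, ← Matrix.mulVec_mulVec, heig,
        Matrix.mulVec_smul]
    · intro h
      apply hz
      apply hVinj
      rw [h, Matrix.mulVec_zero]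
  refine ⟨main, ?_⟩
  intro θ hθ
  rw [mem_spectrum_iff_aux] at hθ ⊢
  obtain ⟨z, hz, h⟩ := hθ
  obtain ⟨h1, h2⟩ := main θ z hz h
  exact ⟨V.mulVec z, h2, h1⟩
end

section
/- Let $V_{k+1} = [V_k, W]$ with orthonormal columns extending $V_k$, let $\check Y_{k+1} = \begin{bmatrix} Y_k & 0 \\ 0 & 0 \end{bmatrix}$, and $X_k = V_k Y_k V_k^*$. Then the residual of $\check Y_{k+1}$ with respect to the reduced Riccati equation at level $k+1$, $\rho_k = T_{k+1}^* \check Y_{k+1} + \check Y_{k+1} T_{k+1} - \check Y_{k+1} B_{k+1} B_{k+1}^* \check Y_{k+1} + C_{k+1}^* C_{k+1}$, equals $V_{k+1}^* R_k V_{k+1}$ where $R_k = A^* X_k + X_k A - X_k B B^* X_k + C^* C$; consequently $\|\rho_k\| \le \|R_k\|$. -/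
open Matrix

noncomputable def opNorm {m n : Type*} [Fintype m] [Fintype n] [DecidableEq n]
    (A : Matrix m n ℂ) : ℝ :=
  ‖(Matrix.toEuclideanLin A).toContinuousLinearMap‖

/-! With `U = [V, W]` and `X = V Y Vᴴ`, orthonormality of the columns of `U` makes the padded
`Z = diag(Y, 0)` intertwine `U` with `X`: `U Z = X U` and `Z Uᴴ = Uᴴ X`. Pushing `U` through every
term of the Riccati expression with these two identities turns the reduced residual into `Uᴴ R U`,
and compressing by an isometry does not increase the spectral norm. -/

namespace Matrix

variable {R : Type*} [Ring R] [StarRing R]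
variable {n m p q : Type*} [Fintype n] [Fintype m] [Fintype p] [Fintype q]

def riccatiResidual (A : Matrix n n R) (B : Matrix n q R) (C : Matrix p n R)
    (X : Matrix n n R) : Matrix n n R :=
  Aᴴ * X + X * A - X * B * Bᴴ * X + Cᴴ * C

theorem riccatiResidual_compress (A : Matrix n n R) (B : Matrix n q R)
    (C : Matrix p n R) {U : Matrix n m R} {X : Matrix n n R} {Z : Matrix m m R}
    (hUZ : U * Z = X * U) (hZU : Z * Uᴴ = Uᴴ * X) :
    riccatiResidual (Uᴴ * A * U) (Uᴴ * B) (C * U) Z = Uᴴ * riccatiResidual A B C X * U := by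
  have hA : (Uᴴ * A * U)ᴴ * Z = Uᴴ * (Aᴴ * X) * U := by
    simp only [conjTranspose_mul, conjTranspose_conjTranspose, Matrix.mul_assoc, hUZ]
  have hA' : Z * (Uᴴ * A * U) = Uᴴ * (X * A) * U := by
    simp only [← Matrix.mul_assoc, hZU]
  have hB : Z * (Uᴴ * B) * (Uᴴ * B)ᴴ * Z = Uᴴ * (X * B * Bᴴ * X) * U := by
    simp only [conjTranspose_mul, conjTranspose_conjTranspose, Matrix.mul_assoc, hUZ]
    simp only [← Matrix.mul_assoc, hZU]
  have hC : (C * U)ᴴ * (C * U) = Uᴴ * (Cᴴ * C) * U := by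
    simp only [conjTranspose_mul, Matrix.mul_assoc]
  simp only [riccatiResidual, hA, hA', hB, hC, Matrix.mul_add, Matrix.add_mul, Matrix.mul_sub,
    Matrix.sub_mul]

section Blocks

variable {k : Type*} [Fintype k] [DecidableEq m] (V : Matrix n m R) (W : Matrix n k R)

omit [Fintype m] [Fintype k] in
theorem conjTranspose_mul_self_fromCols_eq_one_iff [DecidableEq k] :
    (fromCols V W)ᴴ * fromCols V W = 1 ↔
      Vᴴ * V = 1 ∧ Vᴴ * W = 0 ∧ Wᴴ * V = 0 ∧ Wᴴ * W = 1 := by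
  rw [conjTranspose_fromCols_eq_fromRows_conjTranspose, fromRows_mul_fromCols, ← fromBlocks_one,
    fromBlocks_inj]

variable {V W} (Y : Matrix m m R) (hVV : Vᴴ * V = 1)
include hVV

theorem fromCols_mul_fromBlocks_zero (hVW : Vᴴ * W = 0) :
    fromCols V W * fromBlocks Y 0 0 (0 : Matrix k k R) = V * Y * Vᴴ * fromCols V W := by
  rw [fromCols_mul_fromBlocks, Matrix.mul_fromCols, Matrix.mul_assoc _ Vᴴ, Matrix.mul_assoc _ Vᴴ,
    hVV, hVW]
  simp

theorem fromBlocks_zero_mul_conjTranspose_fromCols (hWV : Wᴴ * V = 0) :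
    fromBlocks Y 0 0 (0 : Matrix k k R) * (fromCols V W)ᴴ = (fromCols V W)ᴴ * (V * Y * Vᴴ) := by
  rw [conjTranspose_fromCols_eq_fromRows_conjTranspose, fromBlocks_mul_fromRows,
    fromRows_mul, ← Matrix.mul_assoc Vᴴ, ← Matrix.mul_assoc Wᴴ, ← Matrix.mul_assoc Vᴴ, hVV,
    ← Matrix.mul_assoc Wᴴ, hWV]
  simp

end Blocks

section L2OpNorm

open scoped Matrix.Norms.L2Operator

variable {𝕜 : Type*} [RCLike 𝕜] {U : Matrix n m 𝕜}

theorem l2_opNorm_one_le [DecidableEq n] : ‖(1 : Matrix n n 𝕜)‖ ≤ 1 := by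
  rw [cstar_norm_def, map_one]
  exact ContinuousLinearMap.norm_id_le

theorem l2_opNorm_le_one_of_conjTranspose_mul_self [DecidableEq m] (hU : Uᴴ * U = 1) :
    ‖U‖ ≤ 1 := by
  have hsq : ‖U‖ * ‖U‖ ≤ 1 := by
    rw [← l2_opNorm_conjTranspose_mul_self, hU]
    exact l2_opNorm_one_le
  nlinarith [norm_nonneg U]

theorem l2_opNorm_conjTranspose_mul_mul_le [DecidableEq n] [DecidableEq m] (hU : Uᴴ * U = 1)
    (M : Matrix n n 𝕜) : ‖Uᴴ * M * U‖ ≤ ‖M‖ := by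
  have hU₁ := l2_opNorm_le_one_of_conjTranspose_mul_self hU
  calc ‖Uᴴ * M * U‖ ≤ ‖Uᴴ‖ * ‖M‖ * ‖U‖ :=
        (l2_opNorm_mul _ _).trans (by gcongr; exact l2_opNorm_mul _ _)
    _ ≤ 1 * ‖M‖ * 1 := by
        rw [l2_opNorm_conjTranspose]
        gcongr
    _ = ‖M‖ := by ring

end L2OpNorm

end Matrix

theorem nested_residual (n p q d d' : ℕ)
    (A : Matrix (Fin n) (Fin n) ℂ) (B : Matrix (Fin n) (Fin q) ℂ)
    (C : Matrix (Fin p) (Fin n) ℂ)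
    (V : Matrix (Fin n) (Fin d) ℂ) (W : Matrix (Fin n) (Fin d') ℂ)
    (Y : Matrix (Fin d) (Fin d) ℂ)
    (hV1 : (Matrix.fromCols V W)ᴴ * (Matrix.fromCols V W) = 1) :
    ((Matrix.fromCols V W)ᴴ * A * (Matrix.fromCols V W))ᴴ * (Matrix.fromBlocks Y 0 0 0)
      + (Matrix.fromBlocks Y 0 0 0) * ((Matrix.fromCols V W)ᴴ * A * (Matrix.fromCols V W))
      - (Matrix.fromBlocks Y 0 0 0 : Matrix (Fin d ⊕ Fin d') (Fin d ⊕ Fin d') ℂ) * ((Matrix.fromCols V W)ᴴ * B)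
          * ((Matrix.fromCols V W)ᴴ * B)ᴴ * (Matrix.fromBlocks Y 0 0 0)
      + (C * Matrix.fromCols V W)ᴴ * (C * Matrix.fromCols V W)
    = (Matrix.fromCols V W)ᴴ
        * (Aᴴ * (V * Y * Vᴴ) + (V * Y * Vᴴ) * A
            - (V * Y * Vᴴ) * B * Bᴴ * (V * Y * Vᴴ) + Cᴴ * C)
        * (Matrix.fromCols V W)
    ∧ opNorm (((Matrix.fromCols V W)ᴴ * A * (Matrix.fromCols V W))ᴴ * (Matrix.fromBlocks Y 0 0 0)
        + (Matrix.fromBlocks Y 0 0 0) * ((Matrix.fromCols V W)ᴴ * A * (Matrix.fromCols V W))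
        - (Matrix.fromBlocks Y 0 0 0 : Matrix (Fin d ⊕ Fin d') (Fin d ⊕ Fin d') ℂ) * ((Matrix.fromCols V W)ᴴ * B)
            * ((Matrix.fromCols V W)ᴴ * B)ᴴ * (Matrix.fromBlocks Y 0 0 0)
        + (C * Matrix.fromCols V W)ᴴ * (C * Matrix.fromCols V W))
      ≤ opNorm (Aᴴ * (V * Y * Vᴴ) + (V * Y * Vᴴ) * A
            - (V * Y * Vᴴ) * B * Bᴴ * (V * Y * Vᴴ) + Cᴴ * C) := by
  obtain ⟨hVV, hVW, hWV, -⟩ := (conjTranspose_mul_self_fromCols_eq_one_iff V W).1 hV1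
  have hres := riccatiResidual_compress A B C (fromCols_mul_fromBlocks_zero Y hVV hVW)
    (fromBlocks_zero_mul_conjTranspose_fromCols Y hVV hWV)
  unfold riccatiResidual at hres
  open scoped Matrix.Norms.L2Operator in
  exact ⟨hres, hres ▸ l2_opNorm_conjTranspose_mul_mul_le hV1 _⟩
end
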